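/- Let H = H₀ + V on ℓ²(ℤ) with (H₀f)(n) = e^{−g}f(n−1) + e^{g}f(n+1), g > 0, and V a (ℤ, [−μ,μ]) pseudo-ergodic real potential. If μ ≥ e^g + e^{−g} then Spec(H) = E + [−μ, μ], where E = {e^{g+iθ} + e^{−g−iθ} : θ ∈ [0,2π]} is the spectrum of H₀. -/

import Mathlib

noncomputable section

/-- `ℓ²(ℤ)` with complex scalars. -/
abbrev L2Z := lp (fun _ : ℤ => ℂ) 2

/-- A real potential `V : ℤ → ℝ` with values in `[-μ, μ]` is `(ℤ, [-μ, μ])` pseudo-ergodic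
(with respect to the translation action of `ℤ` on itself). -/
def IsPseudoErgodicZ (μ : ℝ) (V : ℤ → ℝ) : Prop :=
  (∀ n, V n ∈ Set.Icc (-μ) μ) ∧
  ∀ ε > (0 : ℝ), ∀ F : Finset ℤ, ∀ W : ℤ → ℝ, (∀ n ∈ F, W n ∈ Set.Icc (-μ) μ) →
    ∃ k : ℤ, ∀ n ∈ F, |W n - V (n + k)| < ε

/-- The ellipse `E = {e^{g+iθ} + e^{-g-iθ} : θ ∈ [0, 2π]}`, the spectrum of `H₀`. -/
def ellipseSpec (g : ℝ) : Set ℂ :=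
  {z : ℂ | ∃ θ ∈ Set.Icc (0 : ℝ) (2 * Real.pi),
    z = Complex.exp ((g : ℂ) + θ * Complex.I) + Complex.exp (-(g : ℂ) - θ * Complex.I)}

set_option maxHeartbeats 1000000

open Complex
open scoped ENNReal NNReal InnerProductSpace

namespace SpecAnderson

/-! ### Basic `ℓ²` facts -/

lemma l2_summable_sq (x : L2Z) : Summable fun n => ‖x n‖^2 := by
  have h := lp.memℓp x
  rw [memℓp_gen_iff (by norm_num : 0 < (2:ℝ≥0∞).toReal)] at h
  simpa using h

lemma l2_norm_sq (x : L2Z) : ‖x‖^2 = ∑' n, ‖x n‖^2 := by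
  have h := lp.norm_rpow_eq_tsum (by norm_num : 0 < (2:ℝ≥0∞).toReal) x
  simpa using h

lemma shift_mem (x : L2Z) (k : ℤ) : Memℓp (fun n : ℤ => x (n+k)) 2 := by
  apply memℓp_gen
  have : Summable fun n : ℤ => ‖x n‖^(2:ℝ≥0∞).toReal := by
    simpa using l2_summable_sq x
  simpa [Function.comp_def] using (Equiv.addRight k).summable_iff.2 this

def shiftL2 (x : L2Z) (k : ℤ) : L2Z := ⟨fun n => x (n+k), shift_mem x k⟩

@[simp] lemma shiftL2_apply (x : L2Z) (k n : ℤ) : shiftL2 x k n = x (n+k) := rfl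

lemma norm_shiftL2 (x : L2Z) (k : ℤ) : ‖shiftL2 x k‖ = ‖x‖ := by
  have h1 : ‖shiftL2 x k‖^2 = ‖x‖^2 := by
    rw [l2_norm_sq, l2_norm_sq]
    simpa using (Equiv.addRight k).tsum_eq (fun n => ‖x n‖^2)
  calc ‖shiftL2 x k‖ = √(‖shiftL2 x k‖^2) := (Real.sqrt_sq (norm_nonneg _)).symm
  _ = √(‖x‖^2) := by rw [h1]
  _ = ‖x‖ := Real.sqrt_sq (norm_nonneg _)

lemma l2_inner_eq (x y : L2Z) : ⟪x, y⟫_ℂ = ∑' n, (starRingEnd ℂ) (x n) * y n := by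
  rw [lp.inner_eq_tsum]; simp [RCLike.inner_apply]; exact tsum_congr fun n => mul_comm _ _

lemma H0_decomp (g : ℝ) (H₀ : L2Z →L[ℂ] L2Z)
    (hH₀ : ∀ (f : L2Z) (n : ℤ),
      (H₀ f) n = Complex.exp (-(g : ℂ)) * f (n - 1) + Complex.exp (g : ℂ) * f (n + 1))
    (x : L2Z) :
    H₀ x = Complex.exp (-(g:ℂ)) • shiftL2 x (-1) + Complex.exp (g:ℂ) • shiftL2 x 1 := by
  apply lp.ext
  funext n
  rw [hH₀]
  simp only [lp.coeFn_add, lp.coeFn_smul, Pi.add_apply, Pi.smul_apply, shiftL2_apply,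
    smul_eq_mul]
  norm_num [sub_eq_add_neg]

lemma inner_shift_neg (x : L2Z) :
    ⟪x, shiftL2 x (-1)⟫_ℂ = (starRingEnd ℂ) ⟪x, shiftL2 x 1⟫_ℂ := by
  rw [show (starRingEnd ℂ) ⟪x, shiftL2 x 1⟫_ℂ = ⟪shiftL2 x 1, x⟫_ℂ from inner_conj_symm _ _,
    l2_inner_eq, l2_inner_eq]
  simp only [shiftL2_apply]
  rw [← (Equiv.addRight (1:ℤ)).tsum_eq (fun n => (starRingEnd ℂ) (x n) * x (n + (-1)))]
  apply tsum_congr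
  intro c
  simp only [Equiv.coe_addRight]
  norm_num

lemma norm_inner_shift_le (x : L2Z) : ‖⟪x, shiftL2 x 1⟫_ℂ‖ ≤ ‖x‖^2 := by
  calc ‖⟪x, shiftL2 x 1⟫_ℂ‖ ≤ ‖x‖ * ‖shiftL2 x 1‖ := norm_inner_le_norm _ _
  _ = ‖x‖^2 := by rw [norm_shiftL2]; ring

lemma inner_MV (μ : ℝ) (V : ℤ → ℝ) (hVb : ∀ n, |V n| ≤ μ)
    (MV : L2Z →L[ℂ] L2Z)
    (hMV : ∀ (f : L2Z) (n : ℤ), (MV f) n = (V n : ℂ) * f n) (x : L2Z) :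
    ∃ t : ℝ, |t| ≤ μ * ‖x‖^2 ∧ ⟪x, MV x⟫_ℂ = (t : ℂ) := by
  have hb : ∀ n : ℤ, ‖V n * ‖x n‖^2‖ ≤ μ * ‖x n‖^2 := by
    intro n
    rw [Real.norm_eq_abs, abs_mul, _root_.abs_of_nonneg (by positivity : (0:ℝ) ≤ ‖x n‖^2)]
    exact mul_le_mul_of_nonneg_right (hVb n) (by positivity)
  have hsumμ : Summable fun n : ℤ => μ * ‖x n‖^2 := (l2_summable_sq x).mul_left μ
  have hnorm : Summable fun n : ℤ => ‖V n * ‖x n‖^2‖ :=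
    Summable.of_nonneg_of_le (fun n => norm_nonneg _) hb hsumμ
  have hsum : Summable fun n : ℤ => V n * ‖x n‖^2 :=
    Summable.of_norm_bounded hsumμ hb
  refine ⟨∑' n, V n * ‖x n‖^2, ?_, ?_⟩
  · rw [← Real.norm_eq_abs]
    calc ‖∑' n, V n * ‖x n‖^2‖ ≤ ∑' n, ‖V n * ‖x n‖^2‖ := norm_tsum_le_tsum_norm hnorm
    _ ≤ ∑' n, μ * ‖x n‖^2 := Summable.tsum_le_tsum hb hnorm hsumμ
    _ = μ * ‖x‖^2 := by rw [tsum_mul_left, l2_norm_sq]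
  · rw [l2_inner_eq]
    have hc : ∀ n : ℤ, (starRingEnd ℂ) (x n) * (MV x) n = ((V n * ‖x n‖^2 : ℝ) : ℂ) := by
      intro n
      rw [hMV, mul_comm ((starRingEnd ℂ) (x n)), mul_assoc, Complex.mul_conj']
      push_cast
      ring
    rw [tsum_congr hc, ← Complex.ofReal_tsum]

/-- The numerical range of `H₀ + MV`. -/
lemma numRange_mem (g μ : ℝ) (H₀ : L2Z →L[ℂ] L2Z)
    (hH₀ : ∀ (f : L2Z) (n : ℤ),
      (H₀ f) n = Complex.exp (-(g : ℂ)) * f (n - 1) + Complex.exp (g : ℂ) * f (n + 1))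
    (V : ℤ → ℝ) (hVb : ∀ n, |V n| ≤ μ)
    (MV : L2Z →L[ℂ] L2Z)
    (hMV : ∀ (f : L2Z) (n : ℤ), (MV f) n = (V n : ℂ) * f n)
    (x : L2Z) (hx : ‖x‖ = 1) :
    ∃ s : ℂ, ‖s‖ ≤ 1 ∧ ∃ t : ℝ, |t| ≤ μ ∧
      ⟪x, (H₀ + MV) x⟫_ℂ
        = (Real.exp g : ℂ) * s + (Real.exp (-g) : ℂ) * (starRingEnd ℂ) s + (t:ℂ) := by
  obtain ⟨t, htb, htv⟩ := inner_MV μ V hVb MV hMV x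
  refine ⟨⟪x, shiftL2 x 1⟫_ℂ, by simpa [hx] using norm_inner_shift_le x, t,
    by simpa [hx] using htb, ?_⟩
  rw [ContinuousLinearMap.add_apply, inner_add_right, htv,
    H0_decomp g H₀ hH₀ x, inner_add_right, inner_smul_right, inner_smul_right,
    inner_shift_neg]
  rw [Complex.ofReal_exp, Complex.ofReal_exp, Complex.ofReal_neg]
  ring

/-! ### Operator-theoretic lemmas -/

lemma isUnit_of_inner_lb (A : L2Z →L[ℂ] L2Z) (δ : ℝ) (hδ : 0 < δ)
    (h : ∀ x : L2Z, δ * ‖x‖^2 ≤ ‖⟪x, A x⟫_ℂ‖) : IsUnit A := by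
  have hbb : ∀ x : L2Z, ‖x‖ ≤ δ⁻¹ * ‖A x‖ := by
    intro x
    rcases eq_or_ne x 0 with rfl | hx
    · simp
    · have h1 : δ * ‖x‖^2 ≤ ‖x‖ * ‖A x‖ := by
        calc δ * ‖x‖^2 ≤ ‖⟪x, A x⟫_ℂ‖ := h x
        _ ≤ ‖x‖ * ‖A x‖ := norm_inner_le_norm _ _
      have hxpos : 0 < ‖x‖ := norm_pos_iff.2 hx
      rw [le_inv_mul_iff₀ hδ]
      nlinarith [norm_nonneg (A x)]
  have hker : LinearMap.ker (A : L2Z →ₗ[ℂ] L2Z) = ⊥ := by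
    rw [LinearMap.ker_eq_bot']
    intro x (hx : A x = 0)
    have h2 := hbb x
    rw [hx] at h2
    simp only [norm_zero, mul_zero] at h2
    have : ‖x‖ = 0 := le_antisymm h2 (norm_nonneg x)
    simpa using this
  have hanti : AntilipschitzWith (⟨δ⁻¹, by positivity⟩ : ℝ≥0) A :=
    ContinuousLinearMap.antilipschitz_of_bound A (by exact_mod_cast hbb)
  have hclosed : IsClosed (LinearMap.range (A : L2Z →ₗ[ℂ] L2Z) : Set L2Z) := by
    have h0 : IsClosed (Set.range A) := hanti.isClosed_range A.uniformContinuous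
    have h1 : (LinearMap.range (A : L2Z →ₗ[ℂ] L2Z) : Set L2Z) = Set.range A := by
      ext y; simp [LinearMap.mem_range]
    rw [h1]; exact h0
  haveI : CompleteSpace (LinearMap.range (A : L2Z →ₗ[ℂ] L2Z) : Submodule ℂ L2Z) := hclosed.completeSpace_coe
  have hrange : LinearMap.range (A : L2Z →ₗ[ℂ] L2Z) = ⊤ := by
    rw [← Submodule.orthogonal_eq_bot_iff, Submodule.eq_bot_iff]
    intro y hy
    have hy' : ⟪A y, y⟫_ℂ = 0 := hy (A y) (LinearMap.mem_range_self _ y)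
    have hy'' : ⟪y, A y⟫_ℂ = 0 := by
      rw [← inner_conj_symm (𝕜 := ℂ), hy', map_zero]
    have h3 := h y
    rw [hy''] at h3
    simp only [norm_zero] at h3
    have h4 : ‖y‖^2 = 0 := le_antisymm (by nlinarith) (sq_nonneg _)
    have h5 : ‖y‖ = 0 := pow_eq_zero_iff (by norm_num) |>.mp h4
    simpa using h5
  let e := ContinuousLinearEquiv.ofBijective A hker hrange
  have hco := ContinuousLinearEquiv.coeFn_ofBijective A hker hrange
  refine ⟨⟨A, (e.symm : L2Z →L[ℂ] L2Z), ?_, ?_⟩, rfl⟩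
  · refine ContinuousLinearMap.ext fun x => ?_
    simp only [ContinuousLinearMap.mul_apply, ContinuousLinearMap.one_apply,
      ContinuousLinearMap.coe_coe, ContinuousLinearEquiv.coe_coe]
    calc A (e.symm x) = e (e.symm x) := (congrFun hco (e.symm x)).symm
    _ = x := e.apply_symm_apply x
  · refine ContinuousLinearMap.ext fun x => ?_
    simp only [ContinuousLinearMap.mul_apply, ContinuousLinearMap.one_apply,
      ContinuousLinearMap.coe_coe, ContinuousLinearEquiv.coe_coe]
    calc e.symm (A x) = e.symm (e x) := by rw [← congrFun hco x]
    _ = x := e.symm_apply_apply x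

lemma not_isUnit_of_approx_eig (A : L2Z →L[ℂ] L2Z)
    (h : ∀ δ > (0:ℝ), ∃ x : L2Z, x ≠ 0 ∧ ‖A x‖ < δ * ‖x‖) : ¬ IsUnit A := by
  rintro ⟨u, rfl⟩
  set B := u.inv with hB
  obtain ⟨x, hx0, hx⟩ := h (‖B‖ + 1)⁻¹ (inv_pos.2 (by linarith [norm_nonneg B]))
  have h1 : B ((u : L2Z →L[ℂ] L2Z) x) = x := by
    have h2 := congrArg (fun (f : L2Z →L[ℂ] L2Z) => f x) u.inv_mul
    simp only [ContinuousLinearMap.mul_apply, ContinuousLinearMap.one_apply] at h2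
    exact h2
  have h2 : ‖x‖ ≤ ‖B‖ * ‖(u : L2Z →L[ℂ] L2Z) x‖ := by
    conv_lhs => rw [← h1]
    exact B.le_opNorm _
  have hxpos : 0 < ‖x‖ := norm_pos_iff.2 hx0
  have hBpos : (0:ℝ) < ‖B‖ + 1 := by linarith [norm_nonneg B]
  have key : ‖x‖ < ‖x‖ := by
    calc ‖x‖ ≤ ‖B‖ * ‖(u : L2Z →L[ℂ] L2Z) x‖ := h2
    _ ≤ (‖B‖ + 1) * ‖(u : L2Z →L[ℂ] L2Z) x‖ := by
        apply mul_le_mul_of_nonneg_right (by linarith) (norm_nonneg _)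
    _ < (‖B‖ + 1) * ((‖B‖ + 1)⁻¹ * ‖x‖) := mul_lt_mul_of_pos_left hx hBpos
    _ = ‖x‖ := by rw [← mul_assoc, mul_inv_cancel₀ (ne_of_gt hBpos), one_mul]
  exact absurd key (lt_irrefl _)

lemma abs_u (θ : ℝ) (m : ℤ) : ‖Complex.exp ((m:ℂ)*θ*Complex.I)‖ = 1 := by
  rw [show (m:ℂ)*θ*Complex.I = ((m*θ:ℝ):ℂ)*Complex.I by push_cast; ring]
  rw [Complex.norm_exp_ofReal_mul_I]

lemma approx_eig (g μ : ℝ) (H₀ : L2Z →L[ℂ] L2Z)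
    (hH₀ : ∀ (f : L2Z) (n : ℤ),
      (H₀ f) n = Complex.exp (-(g : ℂ)) * f (n - 1) + Complex.exp (g : ℂ) * f (n + 1))
    (V : ℤ → ℝ) (hV : IsPseudoErgodicZ μ V)
    (MV : L2Z →L[ℂ] L2Z)
    (hMV : ∀ (f : L2Z) (n : ℤ), (MV f) n = (V n : ℂ) * f n)
    (θ t : ℝ) (ht : t ∈ Set.Icc (-μ) μ) (z : ℂ)
    (hz : z = Complex.exp ((g:ℂ) + θ*Complex.I) + Complex.exp (-(g:ℂ) - θ*Complex.I) + (t:ℂ))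
    (δ : ℝ) (hδ : 0 < δ) :
    ∃ x : L2Z, x ≠ 0 ∧ ‖z • x - (H₀ + MV) x‖ < δ * ‖x‖ := by
  set A : ℝ := Real.exp g + Real.exp (-g) with hA
  have hApos : 0 < A := by positivity
  set Rq : ℝ := (4*(δ/2 + A)^2 + δ^2/2) / ((3/4)*δ^2) with hRq
  set N : ℕ := ⌈Rq⌉₊ + 1 with hN
  have hNR : Rq < (N:ℝ) := by
    calc Rq ≤ (⌈Rq⌉₊ : ℝ) := Nat.le_ceil Rq
    _ < (N:ℝ) := by rw [hN]; push_cast; linarith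
  have hN1 : 1 ≤ N := by omega
  obtain ⟨k, hk⟩ := hV.2 (δ/2) (by linarith) (Finset.Icc 1 (N:ℤ)) (fun _ => t)
    (fun n _ => ht)
  set a : ℤ := k + 1 with ha
  set b : ℤ := k + N with hb
  have hab : a ≤ b := by omega
  have hVt : ∀ n : ℤ, a ≤ n → n ≤ b → |t - V n| < δ/2 := by
    intro n h1 h2
    have := hk (n - k) (by rw [Finset.mem_Icc]; omega)
    simpa [sub_add_cancel] using this
  set u : ℤ → ℂ := fun m => Complex.exp ((m:ℂ)*θ*Complex.I) with hu
  set xf : ℤ → ℂ := fun m => if a ≤ m ∧ m ≤ b then u m else 0 with hxf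
  have hxf0 : ∀ m : ℤ, m ∉ Finset.Icc a b → ‖xf m‖^2 = 0 := by
    intro m hm
    rw [Finset.mem_Icc] at hm
    simp only [hxf]
    rw [if_neg hm]
    simp
  have hxmem : Memℓp xf 2 := by
    apply memℓp_gen
    have : Summable fun m : ℤ => ‖xf m‖^2 :=
      summable_of_ne_finset_zero (s := Finset.Icc a b) (fun m hm => hxf0 m hm)
    simpa using this
  set x : L2Z := ⟨xf, hxmem⟩ with hx
  have hxapp : ∀ m : ℤ, x m = xf m := fun m => rfl
  have hxnorm2 : ‖x‖^2 = (N:ℝ) := by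
    rw [l2_norm_sq]
    rw [tsum_eq_sum (s := Finset.Icc a b) (fun m hm => by rw [hxapp]; exact hxf0 m hm)]
    have hone : ∀ m ∈ Finset.Icc a b, ‖x m‖^2 = 1 := by
      intro m hm
      rw [Finset.mem_Icc] at hm
      rw [hxapp]
      simp only [hxf]
      rw [if_pos hm, hu]
      rw [abs_u]; norm_num
    rw [Finset.sum_congr rfl hone]
    simp [Int.card_Icc, ha, hb]
  have hxnorm : ‖x‖ = Real.sqrt N := by
    rw [← hxnorm2, Real.sqrt_sq (norm_nonneg _)]
  have hxne : x ≠ 0 := by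
    intro h0
    rw [h0] at hxnorm2
    have hN0 : (N:ℝ) = 0 := by simpa using hxnorm2.symm
    have : N = 0 := by exact_mod_cast hN0
    omega
  refine ⟨x, hxne, ?_⟩
  set w : L2Z := z • x - (H₀ + MV) x with hwdef
  have hw : ∀ n : ℤ, w n
      = z * xf n - (Complex.exp (-(g:ℂ)) * xf (n-1) + Complex.exp ((g:ℂ)) * xf (n+1)
          + (V n : ℂ) * xf n) := by
    intro n
    rw [hwdef]
    rw [lp.coeFn_sub]
    simp only [Pi.sub_apply]
    rw [lp.coeFn_smul]
    simp only [Pi.smul_apply, smul_eq_mul]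
    rw [ContinuousLinearMap.add_apply, lp.coeFn_add]
    simp only [Pi.add_apply]
    rw [hH₀, hMV]
  have key : ∀ n : ℤ, Complex.exp (-(g:ℂ)) * u (n-1) + Complex.exp ((g:ℂ)) * u (n+1)
      = (Complex.exp ((g:ℂ) + θ*Complex.I) + Complex.exp (-(g:ℂ) - θ*Complex.I)) * u n := by
    intro n
    simp only [hu]
    push_cast
    calc Complex.exp (-(g:ℂ)) * Complex.exp (((n:ℂ)-1)*θ*Complex.I)
        + Complex.exp ((g:ℂ)) * Complex.exp (((n:ℂ)+1)*θ*Complex.I)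
        = Complex.exp (-(g:ℂ) + ((n:ℂ)-1)*θ*Complex.I)
          + Complex.exp ((g:ℂ) + ((n:ℂ)+1)*θ*Complex.I) := by
          rw [← Complex.exp_add, ← Complex.exp_add]
    _ = Complex.exp ((-(g:ℂ) - θ*Complex.I) + (n:ℂ)*θ*Complex.I)
        + Complex.exp (((g:ℂ) + θ*Complex.I) + (n:ℂ)*θ*Complex.I) := by
          rw [show -(g:ℂ) + ((n:ℂ)-1)*θ*Complex.I
              = (-(g:ℂ) - θ*Complex.I) + (n:ℂ)*θ*Complex.I by ring,
            show (g:ℂ) + ((n:ℂ)+1)*θ*Complex.I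
              = ((g:ℂ) + θ*Complex.I) + (n:ℂ)*θ*Complex.I by ring]
    _ = _ := by rw [Complex.exp_add, Complex.exp_add]; ring
  set bnd : ℤ → ℝ := fun n =>
    if n = a-1 ∨ n = a ∨ n = b ∨ n = b+1 then (δ/2 + A)^2
    else if a ≤ n ∧ n ≤ b then (δ/2)^2 else 0 with hbnd
  have hbnd0 : ∀ n : ℤ, n ∉ Finset.Icc (a-1) (b+1) → bnd n = 0 := by
    intro n hn
    rw [Finset.mem_Icc] at hn
    simp only [hbnd]
    rw [if_neg (by omega), if_neg (by omega)]
  have hbndnn : ∀ n : ℤ, 0 ≤ bnd n := by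
    intro n
    simp only [hbnd]
    split_ifs <;> positivity
  have hexpneg : ‖Complex.exp (-(g:ℂ))‖ = Real.exp (-g) := by
    rw [Complex.norm_exp]
    norm_num
  have hexppos : ‖Complex.exp ((g:ℂ))‖ = Real.exp g := by
    rw [Complex.norm_exp]
    norm_num
  have habsu : ∀ m : ℤ, ‖u m‖ = 1 := fun m => abs_u θ m
  have hrealnorm : ∀ r : ℝ, ‖((r:ℝ):ℂ)‖ = |r| := by
    intro r
    rw [Complex.norm_real, Real.norm_eq_abs]
  have P2 : ∀ n : ℤ, ‖w n‖^2 ≤ bnd n := by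
    intro n
    by_cases hn : a ≤ n ∧ n ≤ b
    · have hval : w n = ((t - V n : ℝ):ℂ) * u n
          + Complex.exp (-(g:ℂ)) * (u (n-1) - xf (n-1))
          + Complex.exp ((g:ℂ)) * (u (n+1) - xf (n+1)) := by
        rw [hw n]
        simp only [hxf]
        rw [if_pos hn, hz]
        push_cast
        linear_combination -(key n)
      have hVn : |t - V n| < δ/2 := hVt n hn.1 hn.2
      by_cases hS : n = a ∨ n = b
      · simp only [hbnd]
        rw [if_pos (by tauto)]
        have hd1 : ‖u (n-1) - xf (n-1)‖ ≤ 1 := by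
          simp only [hxf]
          split_ifs with h
          · simp
          · simp [habsu]
        have hd2 : ‖u (n+1) - xf (n+1)‖ ≤ 1 := by
          simp only [hxf]
          split_ifs with h
          · simp
          · simp [habsu]
        have hnb : ‖w n‖ ≤ |t - V n| + ‖Complex.exp (-(g:ℂ))‖ * ‖u (n-1) - xf (n-1)‖
            + ‖Complex.exp ((g:ℂ))‖ * ‖u (n+1) - xf (n+1)‖ := by
          rw [hval]
          calc ‖_ + _ + _‖ ≤ ‖((t - V n : ℝ):ℂ) * u n
              + Complex.exp (-(g:ℂ)) * (u (n-1) - xf (n-1))‖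
              + ‖Complex.exp ((g:ℂ)) * (u (n+1) - xf (n+1))‖ := norm_add_le _ _
          _ ≤ ‖((t - V n : ℝ):ℂ) * u n‖ + ‖Complex.exp (-(g:ℂ)) * (u (n-1) - xf (n-1))‖
              + ‖Complex.exp ((g:ℂ)) * (u (n+1) - xf (n+1))‖ := by
                have := norm_add_le (((t - V n : ℝ):ℂ) * u n)
                  (Complex.exp (-(g:ℂ)) * (u (n-1) - xf (n-1)))
                linarith
          _ = _ := by
                rw [norm_mul, norm_mul, norm_mul, habsu, mul_one, hrealnorm]
        have h1 : ‖w n‖ ≤ δ/2 + A := by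
          rw [hA]
          have e1 := Real.exp_pos g
          have e2 := Real.exp_pos (-g)
          calc ‖w n‖ ≤ _ := hnb
          _ ≤ δ/2 + Real.exp (-g) * 1 + Real.exp g * 1 := by
              rw [hexpneg, hexppos]
              have h3 := mul_le_mul_of_nonneg_left hd1 (le_of_lt e2)
              have h4 := mul_le_mul_of_nonneg_left hd2 (le_of_lt e1)
              linarith
          _ = δ/2 + (Real.exp g + Real.exp (-g)) := by ring
        have h0 : 0 ≤ ‖w n‖ := norm_nonneg _
        nlinarith
      · push_neg at hS
        have hm : a ≤ n-1 ∧ n-1 ≤ b := by omega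
        have hp : a ≤ n+1 ∧ n+1 ≤ b := by omega
        have hval2 : w n = ((t - V n : ℝ):ℂ) * u n := by
          rw [hval]
          simp only [hxf]
          rw [if_pos hm, if_pos hp]
          ring
        simp only [hbnd]
        rw [if_neg (by omega), if_pos hn]
        rw [hval2, norm_mul, habsu, mul_one, hrealnorm]
        nlinarith [abs_nonneg (t - V n)]
    · have hxfn : xf n = 0 := by simp only [hxf]; rw [if_neg hn]
      by_cases hm : a ≤ n-1 ∧ n-1 ≤ b
      · have hp' : ¬(a ≤ n+1 ∧ n+1 ≤ b) := by omega
        have hval2 : w n = -(Complex.exp (-(g:ℂ)) * u (n-1)) := by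
          rw [hw n]
          simp only [hxf]
          rw [if_neg hn, if_pos hm, if_neg hp']
          ring
        simp only [hbnd]
        rw [if_pos (by omega)]
        rw [hval2, norm_neg, norm_mul, hexpneg, habsu, mul_one]
        have e2 := Real.exp_pos (-g)
        have e1 := Real.exp_pos g
        nlinarith
      · by_cases hp : a ≤ n+1 ∧ n+1 ≤ b
        · have hval2 : w n = -(Complex.exp ((g:ℂ)) * u (n+1)) := by
            rw [hw n]
            simp only [hxf]
            rw [if_neg hn, if_neg hm, if_pos hp]
            ring
          simp only [hbnd]
          rw [if_pos (by omega)]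
          rw [hval2, norm_neg, norm_mul, hexppos, habsu, mul_one]
          have e2 := Real.exp_pos (-g)
          have e1 := Real.exp_pos g
          nlinarith
        · have hval2 : w n = 0 := by
            rw [hw n]
            simp only [hxf]
            rw [if_neg hn, if_neg hm, if_neg hp]
            ring
          rw [hval2]
          simpa using hbndnn n
  -- assemble the norm bound
  have hsummb : Summable bnd := summable_of_ne_finset_zero (s := Finset.Icc (a-1) (b+1)) hbnd0
  have hw2 : ‖w‖^2 ≤ ∑' n, bnd n := by
    rw [l2_norm_sq]
    exact Summable.tsum_le_tsum P2 (l2_summable_sq w) hsummb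
  have hsum : ∑' n, bnd n = ∑ n ∈ Finset.Icc (a-1) (b+1), bnd n := tsum_eq_sum hbnd0
  have hptb : ∀ n ∈ Finset.Icc (a-1) (b+1), bnd n ≤ (δ/2)^2
      + (if n = a-1 ∨ n = a ∨ n = b ∨ n = b+1 then (δ/2+A)^2 else 0) := by
    intro n _
    simp only [hbnd]
    split_ifs with h1 h2 <;> nlinarith [sq_nonneg (δ/2), sq_nonneg (δ/2+A)]
  have hcard : (Finset.Icc (a-1) (b+1)).card = N + 2 := by
    rw [Int.card_Icc]
    omega
  have hsum2 : ∑ n ∈ Finset.Icc (a-1) (b+1), bnd n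
      ≤ ((N:ℝ)+2)*(δ/2)^2 + 4*(δ/2+A)^2 := by
    calc ∑ n ∈ Finset.Icc (a-1) (b+1), bnd n
        ≤ ∑ n ∈ Finset.Icc (a-1) (b+1), ((δ/2)^2
          + (if n = a-1 ∨ n = a ∨ n = b ∨ n = b+1 then (δ/2+A)^2 else 0)) :=
          Finset.sum_le_sum hptb
    _ = ((N:ℝ)+2)*(δ/2)^2
        + ∑ n ∈ Finset.Icc (a-1) (b+1),
            (if n = a-1 ∨ n = a ∨ n = b ∨ n = b+1 then (δ/2+A)^2 else 0) := by
          rw [Finset.sum_add_distrib, Finset.sum_const, hcard, nsmul_eq_mul]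
          push_cast
          ring
    _ ≤ ((N:ℝ)+2)*(δ/2)^2 + 4*(δ/2+A)^2 := by
          have hfs : ∑ n ∈ Finset.Icc (a-1) (b+1),
              (if n = a-1 ∨ n = a ∨ n = b ∨ n = b+1 then (δ/2+A)^2 else 0)
              = ∑ n ∈ (Finset.Icc (a-1) (b+1)).filter
                  (fun n => n = a-1 ∨ n = a ∨ n = b ∨ n = b+1), (δ/2+A)^2 :=
            (Finset.sum_filter _ _).symm
          rw [hfs, Finset.sum_const, nsmul_eq_mul]
          have hsub : (Finset.Icc (a-1) (b+1)).filter
              (fun n => n = a-1 ∨ n = a ∨ n = b ∨ n = b+1)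
              ⊆ insert (a-1) (insert a (insert b ({b+1} : Finset ℤ))) := by
            intro m hm
            rw [Finset.mem_filter] at hm
            simp only [Finset.mem_insert, Finset.mem_singleton]
            tauto
          have hc4 : ((Finset.Icc (a-1) (b+1)).filter
              (fun n => n = a-1 ∨ n = a ∨ n = b ∨ n = b+1)).card ≤ 4 := by
            calc _ ≤ (insert (a-1) (insert a (insert b ({b+1} : Finset ℤ)))).card :=
                Finset.card_le_card hsub
            _ ≤ 4 := by
                have h1 := Finset.card_insert_le (a-1) (insert a (insert b ({b+1} : Finset ℤ)))
                have h2 := Finset.card_insert_le a (insert b ({b+1} : Finset ℤ))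
                have h3 := Finset.card_insert_le b ({b+1} : Finset ℤ)
                simp only [Finset.card_singleton] at *
                omega
          have : (((Finset.Icc (a-1) (b+1)).filter
              (fun n => n = a-1 ∨ n = a ∨ n = b ∨ n = b+1)).card : ℝ) ≤ 4 := by
            exact_mod_cast hc4
          nlinarith [sq_nonneg (δ/2+A)]
  have hfinal2 : ‖w‖^2 < (δ * ‖x‖)^2 := by
    have hq : ((N:ℝ)+2)*(δ/2)^2 + 4*(δ/2+A)^2 < δ^2 * N := by
      have h34 : (0:ℝ) < (3/4)*δ^2 := by positivity
      have := (div_lt_iff₀ h34).mp hNR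
      nlinarith
    calc ‖w‖^2 ≤ ∑' n, bnd n := hw2
    _ = _ := hsum
    _ ≤ ((N:ℝ)+2)*(δ/2)^2 + 4*(δ/2+A)^2 := hsum2
    _ < δ^2 * N := hq
    _ = (δ * ‖x‖)^2 := by rw [mul_pow, hxnorm2]
  have hdx : 0 < δ * ‖x‖ := by
    apply mul_pos hδ
    rw [hxnorm]
    have : (0:ℝ) < (N:ℝ) := by exact_mod_cast hN1
    exact Real.sqrt_pos.mpr this
  calc ‖w‖ = Real.sqrt (‖w‖^2) := (Real.sqrt_sq (norm_nonneg _)).symm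
  _ < Real.sqrt ((δ * ‖x‖)^2) := by
      apply Real.sqrt_lt_sqrt (sq_nonneg _) hfinal2
  _ = δ * ‖x‖ := Real.sqrt_sq (le_of_lt hdx)


lemma exists_theta (c v : ℝ) (h : c^2 + v^2 = 1) :
    ∃ θ ∈ Set.Icc (0:ℝ) (2*Real.pi),
      Complex.exp ((θ:ℂ)*Complex.I) = (c:ℂ) + (v:ℂ)*Complex.I := by
  set wc : ℂ := (c:ℂ) + (v:ℂ)*Complex.I with hwc
  have habs : ‖wc‖ = 1 := by
    have h1 : Complex.normSq wc = 1 := by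
      rw [hwc, Complex.normSq_add_mul_I]
      exact_mod_cast h
    have h2 : ‖wc‖ ^ 2 = 1 := by rw [Complex.sq_norm, h1]
    nlinarith [norm_nonneg wc]
  have hexp : Complex.exp ((Complex.arg wc : ℂ) * Complex.I) = wc := by
    have := Complex.norm_mul_exp_arg_mul_I wc
    rw [habs] at this
    simpa using this
  have hpi := Real.pi_pos
  by_cases hsgn : 0 ≤ Complex.arg wc
  · exact ⟨Complex.arg wc, ⟨hsgn, by linarith [Complex.arg_le_pi wc]⟩, hexp⟩
  · refine ⟨Complex.arg wc + 2*Real.pi, ⟨by linarith [Complex.neg_pi_lt_arg wc], by linarith⟩, ?_⟩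
    rw [show (((Complex.arg wc + 2*Real.pi : ℝ)):ℂ) * Complex.I
        = (Complex.arg wc : ℂ) * Complex.I + 2*(Real.pi:ℂ)*Complex.I by push_cast; ring]
    rw [Complex.exp_add, Complex.exp_two_pi_mul_I, mul_one, hexp]

lemma geom_step (g μ : ℝ) (hg : 0 < g) (hμ : Real.exp g + Real.exp (-g) ≤ μ)
    (s : ℂ) (hs : ‖s‖ ≤ 1) (t : ℝ) (ht : |t| ≤ μ) :
    ∃ θ ∈ Set.Icc (0:ℝ) (2*Real.pi), ∃ t' : ℝ, |t'| ≤ μ ∧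
      (Real.exp g : ℂ) * s + (Real.exp (-g) : ℂ) * (starRingEnd ℂ) s + (t:ℂ)
        = Complex.exp ((g:ℂ) + θ*Complex.I) + Complex.exp (-(g:ℂ) - θ*Complex.I) + (t':ℂ) := by
  set A : ℝ := Real.exp g + Real.exp (-g) with hA
  have hApos : 0 < A := by positivity
  set u : ℝ := s.re with hsre
  set v : ℝ := s.im with hsim
  have huv : u^2 + v^2 ≤ 1 := by
    have h1 : Complex.normSq s ≤ 1 := by
      rw [← Complex.sq_norm]
      nlinarith [norm_nonneg s]
    have h2 : Complex.normSq s = u^2 + v^2 := by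
      rw [Complex.normSq_apply]; ring
    linarith
  have hv2 : v^2 ≤ 1 := by nlinarith [sq_nonneg u]
  set c0 : ℝ := Real.sqrt (1 - v^2) with hc0
  have hc0nn : 0 ≤ c0 := Real.sqrt_nonneg _
  have hc0sq : c0^2 = 1 - v^2 := Real.sq_sqrt (by linarith)
  have hc0le1 : c0 ≤ 1 := by nlinarith [sq_nonneg v]
  have huc0 : |u| ≤ c0 := by
    rw [← Real.sqrt_sq_eq_abs]
    apply Real.sqrt_le_sqrt
    nlinarith
  set c : ℝ := if 0 ≤ A*u + t then c0 else -c0 with hc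
  have hcsq : c^2 + v^2 = 1 := by
    rw [hc]; split_ifs <;> [skip; rw [neg_pow]] <;> nlinarith
  obtain ⟨θ, hθmem, hθ⟩ := exists_theta c v hcsq
  refine ⟨θ, hθmem, A*u + t - A*c, ?_, ?_⟩
  · rw [abs_le]
    have hu1 : -c0 ≤ u := by cases abs_le.mp huc0; linarith
    have hu2 : u ≤ c0 := by cases abs_le.mp huc0; linarith
    have htt := abs_le.mp ht
    rw [hc]
    split_ifs with hsign
    · constructor <;> nlinarith
    · push_neg at hsign
      constructor <;> nlinarith
  · have hconj : (starRingEnd ℂ) s = (u:ℂ) - (v:ℂ)*Complex.I := by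
      rw [show s = (u:ℂ) + (v:ℂ)*Complex.I from (Complex.re_add_im s).symm]
      rw [map_add, map_mul]
      simp [Complex.conj_ofReal, Complex.conj_I]
      ring
    have hs' : s = (u:ℂ) + (v:ℂ)*Complex.I := (Complex.re_add_im s).symm
    have hcsqC : (c:ℂ)^2 + (v:ℂ)^2 = 1 := by
      rw [show ((1:ℂ)) = ((1:ℝ):ℂ) by norm_num, ← hcsq]
      push_cast
      ring
    have he1 : Complex.exp ((g:ℂ) + θ*Complex.I)
        = Complex.exp ((g:ℂ)) * ((c:ℂ) + (v:ℂ)*Complex.I) := by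
      rw [Complex.exp_add, hθ]
    have he2 : Complex.exp (-(g:ℂ) - θ*Complex.I)
        = Complex.exp (-(g:ℂ)) * ((c:ℂ) - (v:ℂ)*Complex.I) := by
      have hinv : Complex.exp (-((θ:ℂ)*Complex.I)) = (c:ℂ) - (v:ℂ)*Complex.I := by
        rw [Complex.exp_neg, hθ]
        apply inv_eq_of_mul_eq_one_left
        linear_combination hcsqC - (v:ℂ)^2 * Complex.I_sq
      rw [show -(g:ℂ) - θ*Complex.I = -(g:ℂ) + -((θ:ℂ)*Complex.I) by ring]
      rw [Complex.exp_add, hinv]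
    rw [he1, he2, hconj, hs', hA]
    push_cast
    ring


/-! ### The filled ellipse plus interval -/

def Cset (g μ : ℝ) : Set ℂ :=
  (fun p : ℂ × ℝ => (Real.exp g : ℂ) * p.1 + (Real.exp (-g) : ℂ) * (starRingEnd ℂ) p.1
      + (p.2:ℂ)) '' (Metric.closedBall 0 1 ×ˢ Set.Icc (-μ) μ)

lemma convex_Cset (g μ : ℝ) : Convex ℝ (Cset g μ) := by
  apply Convex.is_linear_image ((convex_closedBall _ _).prod (convex_Icc _ _))
  constructor
  · intro p q
    simp only [Prod.fst_add, Prod.snd_add, map_add, Complex.ofReal_add]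
    ring
  · intro r p
    simp only [Prod.smul_fst, Prod.smul_snd, smul_eq_mul, Complex.real_smul,
      Complex.ofReal_mul, map_mul, Complex.conj_ofReal]
    ring

lemma isCompact_Cset (g μ : ℝ) : IsCompact (Cset g μ) := by
  apply IsCompact.image ((isCompact_closedBall 0 1).prod isCompact_Icc)
  apply Continuous.add
  apply Continuous.add
  · exact continuous_const.mul continuous_fst
  · exact continuous_const.mul (continuous_star.comp continuous_fst)
  · exact Complex.continuous_ofReal.comp continuous_snd

lemma isClosed_Cset (g μ : ℝ) : IsClosed (Cset g μ) := (isCompact_Cset g μ).isClosed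

lemma mem_Cset (g μ : ℝ) (s : ℂ) (hs : ‖s‖ ≤ 1) (t : ℝ) (ht : |t| ≤ μ) :
    (Real.exp g : ℂ) * s + (Real.exp (-g) : ℂ) * (starRingEnd ℂ) s + (t:ℂ) ∈ Cset g μ := by
  exact ⟨(s, t), ⟨by simpa [Metric.mem_closedBall, dist_zero_right] using hs,
    by rw [Set.mem_Icc]; exact abs_le.mp ht⟩, rfl⟩

end SpecAnderson

open SpecAnderson in
theorem spec_anderson_eq_of_large_mu
    (g μ : ℝ) (hg : 0 < g) (hμ : Real.exp g + Real.exp (-g) ≤ μ)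
    (H₀ : L2Z →L[ℂ] L2Z)
    (hH₀ : ∀ (f : L2Z) (n : ℤ),
      (H₀ f) n = Complex.exp (-(g : ℂ)) * f (n - 1) + Complex.exp (g : ℂ) * f (n + 1))
    (V : ℤ → ℝ) (hV : IsPseudoErgodicZ μ V)
    (MV : L2Z →L[ℂ] L2Z)
    (hMV : ∀ (f : L2Z) (n : ℤ), (MV f) n = (V n : ℂ) * f n) :
    spectrum ℂ (H₀ + MV) =
      {z : ℂ | ∃ e ∈ ellipseSpec g, ∃ t ∈ Set.Icc (-μ) μ, z = e + (t : ℂ)} := by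
  have hμ0 : 0 < μ := lt_of_lt_of_le (by positivity) hμ
  have hVb : ∀ n, |V n| ≤ μ := fun n => abs_le.mpr (hV.1 n)
  have hAapp : ∀ z : ℂ, ∀ y : L2Z,
      (algebraMap ℂ (L2Z →L[ℂ] L2Z) z - (H₀+MV)) y = z • y - (H₀+MV) y := by
    intro z y
    simp [Algebra.algebraMap_eq_smul_one, ContinuousLinearMap.sub_apply,
      ContinuousLinearMap.smul_apply, ContinuousLinearMap.one_apply]
  ext z
  constructor
  · intro hz
    -- upper bound via numerical range: z must lie in Cset
    have hzC : z ∈ Cset g μ := by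
      by_contra hzC
      obtain ⟨f, uu, hfu, hufz⟩ :=
        geometric_hahn_banach_closed_point (convex_Cset g μ) (isClosed_Cset g μ) hzC
      set δ₀ : ℝ := f z - uu with hδ₀
      have hδ₀pos : 0 < δ₀ := by rw [hδ₀]; linarith
      -- for every unit vector, the inner product is bounded below
      have hunit : ∀ y : L2Z, ‖y‖ = 1 →
          δ₀ ≤ ‖f‖ * ‖⟪y, (algebraMap ℂ (L2Z →L[ℂ] L2Z) z - (H₀+MV)) y⟫_ℂ‖ := by
        intro y hy
        obtain ⟨s, hs1, t, ht1, hin⟩ := numRange_mem g μ H₀ hH₀ V hVb MV hMV y hy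
        set wn : ℂ := ⟪y, (H₀+MV) y⟫_ℂ with hwn
        have hmem : wn ∈ Cset g μ := by rw [hin]; exact mem_Cset g μ s hs1 t ht1
        have hinner : ⟪y, (algebraMap ℂ (L2Z →L[ℂ] L2Z) z - (H₀+MV)) y⟫_ℂ = z - wn := by
          rw [hAapp z y, inner_sub_right, inner_smul_right,
            inner_self_eq_norm_sq_to_K (𝕜 := ℂ), hy, hwn]
          norm_num
          exact inner_add_right _ _ _
        rw [hinner]
        have h1 : f wn < uu := hfu wn hmem
        have h2 : δ₀ ≤ f (z - wn) := by rw [map_sub]; linarith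
        calc δ₀ ≤ f (z - wn) := h2
        _ ≤ |f (z - wn)| := le_abs_self _
        _ ≤ ‖f‖ * ‖z - wn‖ := by
            rw [← Real.norm_eq_abs]
            exact f.le_opNorm _
      -- ‖f‖ is positive
      have hfpos : 0 < ‖f‖ := by
        have hx0 : ‖(lp.single 2 (0:ℤ) (1:ℂ) : L2Z)‖ = 1 := by
          have := lp.norm_single (p := 2) (E := fun _ : ℤ => ℂ) (by norm_num) (0:ℤ) (1:ℂ)
          simpa using this
        have h5 := hunit _ hx0
        by_contra hle
        push_neg at hle
        have hf0 : ‖f‖ = 0 := le_antisymm hle (norm_nonneg _)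
        rw [hf0, zero_mul] at h5
        linarith
      set δ : ℝ := δ₀ / ‖f‖ with hδ
      have hδpos : 0 < δ := div_pos hδ₀pos hfpos
      have hkey : ∀ x : L2Z, δ * ‖x‖^2
          ≤ ‖⟪x, (algebraMap ℂ (L2Z →L[ℂ] L2Z) z - (H₀+MV)) x⟫_ℂ‖ := by
        intro x
        rcases eq_or_ne x 0 with rfl | hx0
        · simp
        · have hxpos : 0 < ‖x‖ := norm_pos_iff.2 hx0
          set r : ℝ := ‖x‖⁻¹ with hr
          have hrpos : 0 < r := by positivity
          set y : L2Z := ((r:ℝ):ℂ) • x with hy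
          have hynorm : ‖y‖ = 1 := by
            rw [hy, norm_smul]
            rw [Complex.norm_real, Real.norm_eq_abs, _root_.abs_of_pos hrpos, hr]
            field_simp
          have hAy : (algebraMap ℂ (L2Z →L[ℂ] L2Z) z - (H₀+MV)) y
              = ((r:ℝ):ℂ) • ((algebraMap ℂ (L2Z →L[ℂ] L2Z) z - (H₀+MV)) x) := by
            rw [hy, map_smul]
          have hinner2 : ⟪y, (algebraMap ℂ (L2Z →L[ℂ] L2Z) z - (H₀+MV)) y⟫_ℂ
              = (((r^2 : ℝ)):ℂ) * ⟪x, (algebraMap ℂ (L2Z →L[ℂ] L2Z) z - (H₀+MV)) x⟫_ℂ := by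
            rw [hAy, hy, inner_smul_left, inner_smul_right, Complex.conj_ofReal]
            push_cast
            ring
          have := hunit y hynorm
          rw [hinner2, norm_mul] at this
          have hrn : ‖(((r^2 : ℝ)):ℂ)‖ = r^2 := by
            rw [Complex.norm_real, Real.norm_eq_abs, _root_.abs_of_pos (by positivity)]
          rw [hrn] at this
          have hr2 : r^2 = (‖x‖^2)⁻¹ := by rw [hr]; field_simp
          rw [hr2] at this
          have hx2 : 0 < ‖x‖^2 := by positivity
          have h6 : δ₀ * ‖x‖^2
              ≤ ‖f‖ * ‖⟪x, (algebraMap ℂ (L2Z →L[ℂ] L2Z) z - (H₀+MV)) x⟫_ℂ‖ := by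
            have h7 := mul_le_mul_of_nonneg_right this (le_of_lt hx2)
            calc δ₀ * ‖x‖^2 ≤ ‖f‖ * ((‖x‖ ^ 2)⁻¹
                * ‖⟪x, (algebraMap ℂ (L2Z →L[ℂ] L2Z) z - (H₀+MV)) x⟫_ℂ‖) * ‖x‖^2 := h7
            _ = ‖f‖ * ‖⟪x, (algebraMap ℂ (L2Z →L[ℂ] L2Z) z - (H₀+MV)) x⟫_ℂ‖ := by
                field_simp
          show δ₀ / ‖f‖ * ‖x‖^2 ≤ _
          rw [div_mul_eq_mul_div, div_le_iff₀ hfpos]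
          linarith
      have : IsUnit (algebraMap ℂ (L2Z →L[ℂ] L2Z) z - (H₀+MV)) :=
        isUnit_of_inner_lb _ δ hδpos hkey
      exact (spectrum.mem_iff.mp hz) this
    -- now unpack membership in Cset and use the geometry
    obtain ⟨⟨s, t⟩, ⟨hsball, htIcc⟩, heq⟩ := hzC
    have hs1 : ‖s‖ ≤ 1 := by simpa [Metric.mem_closedBall, dist_zero_right] using hsball
    have ht1 : |t| ≤ μ := abs_le.mpr (Set.mem_Icc.mp htIcc)
    obtain ⟨θ, hθmem, t', ht', hgeo⟩ := geom_step g μ hg hμ s hs1 t ht1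
    refine ⟨Complex.exp ((g:ℂ) + θ*Complex.I) + Complex.exp (-(g:ℂ) - θ*Complex.I),
      ⟨θ, hθmem, rfl⟩, t', Set.mem_Icc.mpr (abs_le.mp ht'), ?_⟩
    have heq' : (Real.exp g : ℂ) * s + (Real.exp (-g):ℂ) * (starRingEnd ℂ) s + (t:ℂ) = z := heq
    rw [← heq']
    exact hgeo
  · rintro ⟨e, ⟨θ, hθmem, he⟩, t, htmem, rfl⟩
    rw [spectrum.mem_iff]
    apply not_isUnit_of_approx_eig
    intro δ hδ
    obtain ⟨x, hx0, hx⟩ := approx_eig g μ H₀ hH₀ V hV MV hMV θ t htmem (e + (t:ℂ))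
      (by rw [he]) δ hδ
    refine ⟨x, hx0, ?_⟩
    rw [hAapp]
    exact hx
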